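/- arXiv:2406.18318 — 3 statements merged into one kernel-verified Lean document; each statement's English description precedes it below -/
import Mathlib

section
/- Let n ≥ 3 and let H : Matrix (ZMod n) (ZMod n) ℂ be the Hermitian adjacency matrix of a mixed graph whose underlying graph is the n-cycle (H j l ≠ 0 if and only if l = j + 1 or l = j − 1) and which is an imaginary cycle: ∏_{j ∈ ZMod n} H j (j+1) ∈ {Complex.I, -Complex.I}. Then the characteristic polynomial of H equals X · p_{n−1} − 2 · p_{n−2}, where p_m denotes the characteristic polynomial (in ℂ[X]) of the adjacency matrix of the path graph on m vertices, with p_0 = 1. -/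
open Polynomial Filter

/-- A matrix `H` is the Hermitian adjacency matrix of a mixed graph: zero diagonal,
entries in `{0, 1, i, -i}`, and Hermitian. -/
def IsMixedAdj {V : Type*} (H : Matrix V V ℂ) : Prop :=
  (∀ v, H v v = 0) ∧
  (∀ u v, H u v = 0 ∨ H u v = 1 ∨ H u v = Complex.I ∨ H u v = -Complex.I) ∧
  (∀ u v, H u v = star (H v u))

/-- The spectral radius of a matrix: the maximum of `|λ|` over its eigenvalues. -/
noncomputable def specRad {V : Type*} [Fintype V] [DecidableEq V] (H : Matrix V V ℂ) : ℝ :=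
  sSup ((fun z : ℂ => ‖z‖) '' spectrum ℂ H)

/-- The largest (real) eigenvalue of a Hermitian matrix. -/
noncomputable def lam1 {V : Type*} [Fintype V] [DecidableEq V] (H : Matrix V V ℂ) : ℝ :=
  sSup {x : ℝ | (x : ℂ) ∈ spectrum ℂ H}

/-- The underlying simple graph of a mixed graph: `u ∼ v` iff `H u v ≠ 0`. -/
def underGraph {V : Type*} (H : Matrix V V ℂ) : SimpleGraph V :=
  SimpleGraph.fromRel fun u v => H u v ≠ 0

/-- The diameter of a finite simple graph. -/
noncomputable def gdiam {V : Type*} [Fintype V] (G : SimpleGraph V) : ℕ :=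
  Finset.univ.sup fun p : V × V => G.dist p.1 p.2

/-- Degree of a vertex in a mixed graph. -/
noncomputable def mdeg {V : Type*} (H : Matrix V V ℂ) (v : V) : ℕ :=
  Nat.card {u // H v u ≠ 0}

/-- Maximum degree of a mixed graph. -/
noncomputable def maxDeg {V : Type*} [Fintype V] (H : Matrix V V ℂ) : ℕ :=
  Finset.univ.sup (mdeg H)

/-- Adjacency matrix (over ℂ) of the path graph on `m` vertices. -/
def pathAdj (m : ℕ) : Matrix (Fin m) (Fin m) ℂ :=
  Matrix.of fun i j => if (i : ℕ) + 1 = (j : ℕ) ∨ (j : ℕ) + 1 = (i : ℕ) then 1 else 0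

/-- `p_m`: characteristic polynomial of the path on `m` vertices (`p_0 = 1`). -/
noncomputable def pPoly (m : ℕ) : Polynomial ℂ := (pathAdj m).charpoly

/-- Build a Hermitian matrix on `Fin n` from a generator of "upper" entries. -/
noncomputable def mkHerm (n : ℕ) (g : ℕ → ℕ → ℂ) : Matrix (Fin n) (Fin n) ℂ :=
  Matrix.of fun i j => g (i : ℕ) (j : ℕ) + star (g (j : ℕ) (i : ℕ))

/-- `C'_{n-1,n}`: imaginary `(n-1)`-cycle on `0,…,n-2` with a pendant vertex `n-1` at `0`. -/
noncomputable def CpPend (n : ℕ) : Matrix (Fin n) (Fin n) ℂ :=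
  mkHerm n fun a b =>
    if a + 1 = b ∧ b ≤ n - 2 then 1
    else if a = n - 2 ∧ b = 0 then Complex.I
    else if a = 0 ∧ b = n - 1 then 1 else 0

/-- `C'_{3,n}`: imaginary triangle on `0,1,2` with an undirected path `0,3,4,…,n-1`. -/
noncomputable def Cp3 (n : ℕ) : Matrix (Fin n) (Fin n) ℂ :=
  mkHerm n fun a b =>
    if (a = 0 ∧ b = 1) ∨ (a = 1 ∧ b = 2) ∨ (a = 0 ∧ b = 3) then 1
    else if a = 2 ∧ b = 0 then Complex.I
    else if 3 ≤ a ∧ a + 1 = b then 1 else 0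

/-- `C'_{k,k+2}`: imaginary `k`-cycle on `0,…,k-1` with a pendant path `0,k,k+1`. -/
noncomputable def CpTail (k : ℕ) : Matrix (Fin (k + 2)) (Fin (k + 2)) ℂ :=
  mkHerm (k + 2) fun a b =>
    if a + 1 = b ∧ b ≤ k - 1 then 1
    else if a = k - 1 ∧ b = 0 then Complex.I
    else if a = 0 ∧ b = k then 1
    else if a = k ∧ b = k + 1 then 1 else 0

/-- `D_{k,t}`: imaginary `k`-cycle with pendant vertices `k` at `0` and `k+1` at `t`. -/
noncomputable def Dkt (k t : ℕ) : Matrix (Fin (k + 2)) (Fin (k + 2)) ℂ :=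
  mkHerm (k + 2) fun a b =>
    if a + 1 = b ∧ b ≤ k - 1 then 1
    else if a = k - 1 ∧ b = 0 then Complex.I
    else if a = 0 ∧ b = k then 1
    else if a = t ∧ b = k + 1 then 1 else 0

/-- `C'_n`: the imaginary `n`-cycle on `ZMod n`. -/
noncomputable def CpCycle (n : ℕ) [NeZero n] : Matrix (ZMod n) (ZMod n) ℂ :=
  Matrix.of fun j l =>
    (if l = j + 1 then (if j = -1 then Complex.I else 1) else 0)
    + (if j = l + 1 then (if l = -1 then -Complex.I else 1) else 0)

/-- `C_n`: the undirected `n`-cycle. -/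
noncomputable def Cund (n : ℕ) : Matrix (Fin n) (Fin n) ℂ :=
  mkHerm n fun a b => if a + 1 = b ∨ (a = n - 1 ∧ b = 0) then 1 else 0

/-- `C''_n`: the negative `n`-cycle. -/
noncomputable def Cneg (n : ℕ) : Matrix (Fin n) (Fin n) ℂ :=
  mkHerm n fun a b =>
    if a + 1 = b ∧ b ≤ n - 2 then 1
    else if a = n - 2 ∧ b = n - 1 then Complex.I
    else if a = n - 1 ∧ b = 0 then Complex.I else 0

/-- `G''_{n-2,n/2}`: negative `(n-2)`-cycle with pendant edges at `v₁` and `v_{n/2}`. -/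
noncomputable def Gpp (n : ℕ) : Matrix (Fin n) (Fin n) ℂ :=
  mkHerm n fun a b =>
    if a + 1 = b ∧ b ≤ n - 4 then 1
    else if a = n - 4 ∧ b = n - 3 then Complex.I
    else if a = n - 3 ∧ b = 0 then Complex.I
    else if a = 0 ∧ b = n - 2 then 1
    else if a = n / 2 - 1 ∧ b = n - 1 then 1 else 0

/-- `U''_{k,m}`: negative `6`-cycle with pendant paths of `k` vertices at `v₁`
and `m` vertices at `v₄`. -/
noncomputable def Upp (k m : ℕ) : Matrix (Fin (6 + k + m)) (Fin (6 + k + m)) ℂ :=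
  mkHerm (6 + k + m) fun a b =>
    if a + 1 = b ∧ b ≤ 4 then 1
    else if a = 4 ∧ b = 5 then Complex.I
    else if a = 5 ∧ b = 0 then Complex.I
    else if a = 0 ∧ b = 6 ∧ 1 ≤ k then 1
    else if 6 ≤ a ∧ a + 1 = b ∧ b ≤ 5 + k then 1
    else if a = 3 ∧ b = 6 + k ∧ 1 ≤ m then 1
    else if 6 + k ≤ a ∧ a + 1 = b ∧ b ≤ 5 + k + m then 1 else 0

/-- `G''_{8,4}`: negative `8`-cycle with pendant edges at `v₁` and `v₄`. -/
noncomputable def Gpp84 : Matrix (Fin 10) (Fin 10) ℂ :=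
  mkHerm 10 fun a b =>
    if a + 1 = b ∧ b ≤ 6 then 1
    else if a = 6 ∧ b = 7 then Complex.I
    else if a = 7 ∧ b = 0 then Complex.I
    else if (a = 0 ∧ b = 8) ∨ (a = 3 ∧ b = 9) then 1 else 0

/-- `G''_{10,5}`: negative `10`-cycle with pendant edges at `v₁` and `v₅`. -/
noncomputable def Gpp105 : Matrix (Fin 12) (Fin 12) ℂ :=
  mkHerm 12 fun a b =>
    if a + 1 = b ∧ b ≤ 8 then 1
    else if a = 8 ∧ b = 9 then Complex.I
    else if a = 9 ∧ b = 0 then Complex.I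
    else if (a = 0 ∧ b = 10) ∨ (a = 4 ∧ b = 11) then 1 else 0

/-- `U''_6`: negative `6`-cycle with a pendant path of 2 vertices at `v₁`
and pendant edges at `v₃`, `v₅`. -/
noncomputable def Upp6 : Matrix (Fin 10) (Fin 10) ℂ :=
  mkHerm 10 fun a b =>
    if a + 1 = b ∧ b ≤ 4 then 1
    else if a = 4 ∧ b = 5 then Complex.I
    else if a = 5 ∧ b = 0 then Complex.I
    else if (a = 0 ∧ b = 6) ∨ (a = 6 ∧ b = 7) ∨ (a = 2 ∧ b = 8) ∨ (a = 4 ∧ b = 9) then 1 else 0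

/-- `U''_8`: negative `8`-cycle with pendant paths of 2 vertices at `v₁` and `v₅`. -/
noncomputable def Upp8 : Matrix (Fin 12) (Fin 12) ℂ :=
  mkHerm 12 fun a b =>
    if a + 1 = b ∧ b ≤ 6 then 1
    else if a = 6 ∧ b = 7 then Complex.I
    else if a = 7 ∧ b = 0 then Complex.I
    else if (a = 0 ∧ b = 8) ∨ (a = 8 ∧ b = 9) ∨ (a = 4 ∧ b = 10) ∨ (a = 10 ∧ b = 11) then 1
    else 0

/-- Two mixed graphs are switching isomorphic. -/
def IsSwitchIso {V₁ V₂ : Type*} (H₁ : Matrix V₁ V₁ ℂ) (H₂ : Matrix V₂ V₂ ℂ) : Prop :=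
  ∃ (σ : V₁ ≃ V₂) (d : V₁ → ℂ),
    (∀ v, d v = 1 ∨ d v = -1 ∨ d v = Complex.I ∨ d v = -Complex.I) ∧
    ((∀ u v, H₂ (σ u) (σ v) = (d u)⁻¹ * H₁ u v * d v) ∨
     (∀ u v, H₂ (σ u) (σ v) = (d u)⁻¹ * star (H₁ u v) * d v))

/-- `M` is switching isomorphic to an induced subgraph (principal submatrix) of `H`. -/
def IsSwitchSub {V U : Type*} (M : Matrix V V ℂ) (H : Matrix U U ℂ) : Prop :=
  ∃ f : V → U, Function.Injective f ∧ IsSwitchIso M (H.submatrix f f)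

/-- `x` is the largest positive real root of `p`. -/
def IsMaxPosRoot (p : Polynomial ℝ) (x : ℝ) : Prop :=
  0 < x ∧ p.eval x = 0 ∧ ∀ y : ℝ, 0 < y → p.eval y = 0 → y ≤ x

/-- The mixed graph obtained from `H` by attaching a pendant path of `n` new
vertices at `v`. -/
noncomputable def attachPath {V : Type*} [DecidableEq V] (H : Matrix V V ℂ) (v : V) (n : ℕ) :
    Matrix (V ⊕ Fin n) (V ⊕ Fin n) ℂ :=
  Matrix.of fun a b =>
    match a, b with
    | Sum.inl u, Sum.inl w => H u w
    | Sum.inl u, Sum.inr i => if u = v ∧ (i : ℕ) = 0 then 1 else 0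
    | Sum.inr i, Sum.inl u => if u = v ∧ (i : ℕ) = 0 then 1 else 0
    | Sum.inr i, Sum.inr j => if (i : ℕ) + 1 = (j : ℕ) ∨ (j : ℕ) + 1 = (i : ℕ) then 1 else 0

/-! Conjugating by the diagonal unitary whose entries are the partial products of the conjugated
edge weights along `0 → 1 → ⋯ → n-1` turns every edge weight into `1`, except on the closing edge
`n-1 → 0`, which then carries the product `c` of all the weights. The characteristic matrix of this
normal form is that of the path plus two corner entries, and the determinant is affine in each of
them; the cofactors are triangular minors or shorter paths, giving
`p_n - (c + c̄) - c c̄ p_{n-2}`. For `c = ±i` this is `p_n - p_{n-2} = X p_{n-1} - 2 p_{n-2}`. -/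

open Matrix

lemma charmatrix_pathAdj_apply {n : ℕ} (i j : Fin n) :
    charmatrix (pathAdj n) i j =
      if (i : ℕ) = j then X else if (i : ℕ) + 1 = j ∨ (j : ℕ) + 1 = i then -1 else 0 := by
  by_cases h : i = j
  · subst h; simp [pathAdj]
  · have h' : (i : ℕ) ≠ j := Fin.val_ne_of_ne h
    simp only [charmatrix_apply_ne _ _ _ h, pathAdj, of_apply, h']
    split_ifs <;> simp_all

lemma charmatrix_pathAdj_submatrix {m n : ℕ} {f g : Fin m → Fin n} (c : ℕ)
    (hf : ∀ i, (f i : ℕ) = i + c) (hg : ∀ i, (g i : ℕ) = i + c) :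
    (charmatrix (pathAdj n)).submatrix f g = charmatrix (pathAdj m) := by
  ext i j
  simp only [submatrix_apply, charmatrix_pathAdj_apply, hf, hg]
  split_ifs <;> first | rfl | omega

lemma det_charmatrix_pathAdj_submatrix_castSucc_succ (k : ℕ) :
    ((charmatrix (pathAdj (k + 1))).submatrix Fin.castSucc Fin.succ).det = (-1) ^ k := by
  rw [det_of_isLowerTriangular]
  · simp [charmatrix_pathAdj_apply]
  · intro i j (hij : i < j)
    have : (i : ℕ) < j := hij
    simp only [submatrix_apply, charmatrix_pathAdj_apply, Fin.val_castSucc, Fin.val_succ]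
    split_ifs <;> first | rfl | omega

lemma det_charmatrix_pathAdj_submatrix_succ_castSucc (k : ℕ) :
    ((charmatrix (pathAdj (k + 1))).submatrix Fin.succ Fin.castSucc).det = (-1) ^ k := by
  rw [det_of_isUpperTriangular]
  · simp [charmatrix_pathAdj_apply]
  · intro i j (hij : j < i)
    have : (j : ℕ) < i := hij
    simp only [submatrix_apply, charmatrix_pathAdj_apply, Fin.val_castSucc, Fin.val_succ]
    split_ifs <;> first | rfl | omega

lemma pPoly_add_two (k : ℕ) : pPoly (k + 2) = X * pPoly (k + 1) - pPoly k := by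
  set P := charmatrix (pathAdj (k + 2))
  have hfirst : P.submatrix Fin.succ (Fin.succAbove 0) = charmatrix (pathAdj (k + 1)) :=
    charmatrix_pathAdj_submatrix 1 (fun _ => rfl) (fun _ => rfl)
  have hsecond : (P.submatrix Fin.succ ((Fin.succ 0).succAbove)).det = -pPoly k := by
    rw [det_succ_column_zero, Fin.sum_univ_succ]
    have hminor : (P.submatrix Fin.succ ((Fin.succ 0).succAbove)).submatrix (Fin.succAbove 0)
        Fin.succ = charmatrix (pathAdj k) :=
      charmatrix_pathAdj_submatrix 2 (fun _ => rfl) (fun _ => rfl)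
    rw [hminor]
    simp [P, pathAdj, pPoly, charpoly]
  rw [pPoly, charpoly, det_succ_row_zero, Fin.sum_univ_succ, Fin.sum_univ_succ, hfirst, hsecond]
  simp only [charmatrix_pathAdj_apply]
  simp [pPoly, charpoly, sub_eq_add_neg]

lemma Matrix.det_add_single {n R : Type*} [Fintype n] [DecidableEq n] [CommRing R]
    (A : Matrix n n R) (i j : n) (c : R) :
    (A + single i j c).det = A.det + c * adjugate A j i := by
  have hrow : A + single i j c = A.updateRow i (A i + c • Pi.single j 1) := by
    ext r s
    by_cases hr : r = i
    · subst hr; simp [single_apply, Pi.single_apply, eq_comm]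
    · simp [hr, Ne.symm hr]
  rw [hrow, det_updateRow_add, updateRow_eq_self, det_updateRow_smul, adjugate_apply]

lemma Matrix.submatrix_single_of_injective {l m n o α : Type*} [DecidableEq l] [DecidableEq m]
    [DecidableEq n] [DecidableEq o] [Zero α] {f : l → m} {g : n → o}
    (hf : Function.Injective f) (hg : Function.Injective g) (i : l) (j : n) (c : α) :
    (single (f i) (g j) c).submatrix f g = single i j c := by
  ext r s
  simp [single_apply, hf.eq_iff, hg.eq_iff]

lemma det_charmatrix_pathAdj_add_corners (k : ℕ) (a b : ℂ[X]) :
    (charmatrix (pathAdj (k + 3)) + single (Fin.last _) 0 a + single 0 (Fin.last _) b).det =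
      pPoly (k + 3) + a + b - a * b * pPoly (k + 1) := by
  set P := charmatrix (pathAdj (k + 3))
  have hP : adjugate P 0 (Fin.last _) = 1 := by
    rw [adjugate_fin_succ_eq_det_submatrix, Fin.succAbove_last, Fin.succAbove_zero,
      det_charmatrix_pathAdj_submatrix_castSucc_succ, Fin.val_last, Fin.val_zero, add_zero,
      ← pow_add, Even.neg_one_pow ⟨_, rfl⟩]
  have hPa : adjugate (P + single (Fin.last _) 0 a) (Fin.last _) 0 = 1 - a * pPoly (k + 1) := by
    set U := P.submatrix Fin.succ Fin.castSucc
    have hsub : (P + single (Fin.last _) 0 a).submatrix Fin.succ Fin.castSucc =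
        U + single (Fin.last _) 0 a := by
      rw [← submatrix_single_of_injective (Fin.succ_injective (k + 2))
        (Fin.castSucc_injective (k + 2))]
      rfl
    have hU : adjugate U 0 (Fin.last _) = (-1) ^ (k + 1) * pPoly (k + 1) := by
      rw [adjugate_fin_succ_eq_det_submatrix, Fin.succAbove_last, Fin.succAbove_zero,
        submatrix_submatrix, charmatrix_pathAdj_submatrix 1 (fun _ => rfl) (fun _ => rfl)]
      simp [pPoly, charpoly]
    rw [adjugate_fin_succ_eq_det_submatrix, Fin.succAbove_last, Fin.succAbove_zero, hsub,
      det_add_single, hU, det_charmatrix_pathAdj_submatrix_succ_castSucc]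
    simp only [Fin.val_zero, Fin.val_last]
    linear_combination
      (1 - a * pPoly (k + 1)) * (Even.neg_one_pow ⟨k, rfl⟩ : (-1 : ℂ[X]) ^ (k + k) = 1)
  have hdet : P.det = pPoly (k + 3) := rfl
  rw [det_add_single, det_add_single, hP, hPa, hdet]
  ring

def twistedCycleAdj (k : ℕ) (c : ℂ) : Matrix (Fin (k + 1)) (Fin (k + 1)) ℂ :=
  pathAdj (k + 1) + single (Fin.last k) 0 c + single 0 (Fin.last k) (star c)

lemma charmatrix_twistedCycleAdj (k : ℕ) (c : ℂ) :
    charmatrix (twistedCycleAdj k c) = charmatrix (pathAdj (k + 1)) +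
      single (Fin.last k) 0 (-C c) + single 0 (Fin.last k) (-C (star c)) := by
  simp only [charmatrix, twistedCycleAdj, map_add, RingHom.mapMatrix_apply, map_single,
    ← single_neg]
  abel

theorem charpoly_twistedCycleAdj (k : ℕ) (c : ℂ) :
    (twistedCycleAdj (k + 2) c).charpoly =
      pPoly (k + 3) - C (c + star c) - C (c * star c) * pPoly (k + 1) := by
  rw [charpoly, charmatrix_twistedCycleAdj, det_charmatrix_pathAdj_add_corners, C_add, C_mul]
  ring

lemma twistedCycleAdj_apply_add_one (k : ℕ) (c : ℂ) (i : Fin (k + 3)) :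
    twistedCycleAdj (k + 2) c i (i + 1) = if i = Fin.last _ then c else 1 := by
  simp only [twistedCycleAdj, Matrix.add_apply, pathAdj, of_apply, single_apply, Fin.ext_iff,
    Fin.val_add_one, Fin.val_last, Fin.val_zero]
  split_ifs <;> simp_all <;> omega

lemma twistedCycleAdj_apply_eq_zero {k : ℕ} (c : ℂ) {i j : Fin (k + 3)} (hij : j ≠ i + 1)
    (hji : i ≠ j + 1) : twistedCycleAdj (k + 2) c i j = 0 := by
  simp only [ne_eq, Fin.ext_iff, Fin.val_add_one, Fin.val_last] at hij hji
  simp only [twistedCycleAdj, Matrix.add_apply, pathAdj, of_apply, single_apply, Fin.ext_iff,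
    Fin.val_last, Fin.val_zero]
  split_ifs at * <;> first | omega | simp

lemma isHermitian_twistedCycleAdj (k : ℕ) (c : ℂ) : (twistedCycleAdj k c).IsHermitian := by
  have hpath : (pathAdj (k + 1)).IsHermitian := by
    ext i j
    simp [pathAdj, or_comm]
  rw [IsHermitian, twistedCycleAdj, conjTranspose_add, conjTranspose_add, hpath.eq,
    conjTranspose_single, conjTranspose_single, star_star, add_right_comm]

lemma Matrix.charpoly_diagonal_mul_mul_diagonal {n R : Type*} [Fintype n] [DecidableEq n]
    [CommRing R] (A : Matrix n n R) {d e : n → R} (hde : ∀ i, d i * e i = 1) :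
    (diagonal e * A * diagonal d).charpoly = A.charpoly := by
  rw [charpoly_mul_comm, ← Matrix.mul_assoc, diagonal_mul_diagonal, funext hde, diagonal_one,
    Matrix.one_mul]

lemma Fin.partialProd_last {M : Type*} [CommMonoid M] {n : ℕ} (f : Fin n → M) :
    partialProd f (last n) = ∏ i, f i := by
  simp [partialProd, List.take_of_length_le, List.prod_ofFn]

theorem charpoly_eq_charpoly_twistedCycleAdj {k : ℕ} {K : Matrix (Fin (k + 3)) (Fin (k + 3)) ℂ}
    (hK : K.IsHermitian) (hsupp : ∀ i j, K i j ≠ 0 → j = i + 1 ∨ i = j + 1)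
    (hunit : ∀ i, star (K i (i + 1)) * K i (i + 1) = 1) :
    K.charpoly = (twistedCycleAdj (k + 2) (∏ i, K i (i + 1))).charpoly := by
  set c := ∏ i, K i (i + 1)
  have hunit' (t : Fin (k + 2)) : star (K t.castSucc t.succ) * K t.castSucc t.succ = 1 := by
    simpa [Fin.coeSucc_eq_succ] using hunit t.castSucc
  set d := Fin.partialProd fun t : Fin (k + 2) => star (K t.castSucc t.succ)
  have hsucc (t : Fin (k + 2)) : d t.succ = d t.castSucc * star (K t.castSucc t.succ) :=
    Fin.partialProd_succ _ t
  have hd (i : Fin (k + 3)) : d i * star (d i) = 1 := by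
    induction i using Fin.induction with
    | zero => simp [d]
    | succ t ih =>
      rw [hsucc, star_mul, star_star]
      linear_combination (star (K t.castSucc t.succ) * K t.castSucc t.succ) * ih + hunit' t
  have hE (i j : Fin (k + 3)) :
      (diagonal (fun i => star (d i)) * K * diagonal d) i j = star (d i) * K i j * d j := by
    simp [diagonal_mul, mul_diagonal]
  have hstep (i : Fin (k + 3)) :
      star (d i) * K i (i + 1) * d (i + 1) = twistedCycleAdj (k + 2) c i (i + 1) := by
    rw [twistedCycleAdj_apply_add_one]
    split_ifs with hi
    · subst hi
      have hc : c = (∏ t : Fin (k + 2), K t.castSucc t.succ) * K (Fin.last _) 0 := by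
        simp [c, Fin.prod_univ_castSucc, Fin.coeSucc_eq_succ]
      simp [hc, d, Fin.partialProd_last, star_prod]
    · obtain ⟨t, rfl⟩ := Fin.exists_castSucc_eq.mpr hi
      rw [Fin.coeSucc_eq_succ, hsucc]
      linear_combination (star (K t.castSucc t.succ) * K t.castSucc t.succ) * hd t.castSucc +
        hunit' t
  have hconj : diagonal (fun i => star (d i)) * K * diagonal d = twistedCycleAdj (k + 2) c := by
    ext i j : 1
    rw [hE]
    by_cases hij : j = i + 1
    · subst hij; exact hstep i
    by_cases hji : i = j + 1
    · subst hji
      rw [← hK.apply, ← (isHermitian_twistedCycleAdj _ _).apply, ← hstep, star_mul, star_mul,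
        star_star]
      ring
    rw [not_imp_comm.mp (hsupp i j) (not_or.mpr ⟨hij, hji⟩),
      twistedCycleAdj_apply_eq_zero _ hij hji]
    ring
  rw [← charpoly_diagonal_mul_mul_diagonal K hd, hconj]

theorem charpoly_eq_of_isHermitian_of_cycle {k : ℕ} {H : Matrix (ZMod (k + 3)) (ZMod (k + 3)) ℂ}
    (hH : H.IsHermitian) (hsupp : ∀ j l, H j l ≠ 0 → l = j + 1 ∨ j = l + 1)
    (hunit : ∀ j, star (H j (j + 1)) * H j (j + 1) = 1) :
    H.charpoly = pPoly (k + 3) - C ((∏ j, H j (j + 1)) + star (∏ j, H j (j + 1))) -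
      C ((∏ j, H j (j + 1)) * star (∏ j, H j (j + 1))) * pPoly (k + 1) := by
  let e : Fin (k + 3) ≃+* ZMod (k + 3) := ZMod.finEquiv (k + 3)
  have he (i : Fin (k + 3)) : e (i + 1) = e i + 1 := by rw [map_add, map_one]
  have hprod : ∏ i, H (e i) (e (i + 1)) = ∏ j, H j (j + 1) := by
    simp only [he]
    exact e.toEquiv.prod_comp fun j => H j (j + 1)
  have hK := charpoly_eq_charpoly_twistedCycleAdj (K := H.submatrix e e) (hH.submatrix e)
    (fun i j h => by simpa only [← he, e.injective.eq_iff] using hsupp (e i) (e j) h)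
    (fun i => by simpa only [submatrix_apply, he] using hunit (e i))
  simp only [submatrix_apply, hprod, charpoly_twistedCycleAdj] at hK
  rw [← hK]
  exact (charpoly_reindex e.toEquiv.symm H).symm

lemma IsMixedAdj.star_mul_self_of_ne_zero {V : Type*} {H : Matrix V V ℂ} (hH : IsMixedAdj H)
    {u v : V} (h : H u v ≠ 0) : star (H u v) * H u v = 1 := by
  rcases hH.2.1 u v with h0 | h1 | h1 | h1
  · exact absurd h0 h
  all_goals simp [h1]

/-- charpoly of an imaginary `n`-cycle (`n = m + 3 ≥ 3`). -/
theorem stmt2 (m : ℕ) (H : Matrix (ZMod (m + 3)) (ZMod (m + 3)) ℂ)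
    (hH : IsMixedAdj H)
    (hadj : ∀ j l : ZMod (m + 3), H j l ≠ 0 ↔ (l = j + 1 ∨ l = j - 1))
    (him : (∏ j : ZMod (m + 3), H j (j + 1)) = Complex.I ∨
           (∏ j : ZMod (m + 3), H j (j + 1)) = -Complex.I) :
    H.charpoly = X * pPoly (m + 2) - 2 * pPoly (m + 1) := by
  have hherm : H.IsHermitian := by
    ext u v
    exact (hH.2.2 u v).symm
  have hsupp (j l : ZMod (m + 3)) (h : H j l ≠ 0) : l = j + 1 ∨ j = l + 1 :=
    ((hadj j l).mp h).imp_right fun hl => (eq_sub_iff_add_eq.mp hl).symm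
  have hunit (j : ZMod (m + 3)) : star (H j (j + 1)) * H j (j + 1) = 1 :=
    hH.star_mul_self_of_ne_zero ((hadj j (j + 1)).mpr (Or.inl rfl))
  obtain ⟨hre, hnorm⟩ : (∏ j, H j (j + 1)) + star (∏ j, H j (j + 1)) = 0 ∧
      (∏ j, H j (j + 1)) * star (∏ j, H j (j + 1)) = 1 := by
    rcases him with h | h <;> rw [h] <;> simp
  rw [charpoly_eq_of_isHermitian_of_cycle hherm hsupp hunit, hre, hnorm, pPoly_add_two, C_0, C_1]
  ring
end

section
/- Let H be the Hermitian adjacency matrix of a mixed graph on a finite nonempty vertex type V whose underlying graph G(H) is connected, and suppose H contains no imaginary mixed cycle: for every k ≥ 3 and every injective map c : ZMod k → V with H (c j) (c (j+1)) ≠ 0 for all j, the product ∏_{j ∈ ZMod k} H (c j) (c (j+1)) is a real number (equivalently, it lies in {1, −1}). Then there exists a symmetric matrix A : Matrix V V ℝ with A v v = 0 for all v, A u v ∈ {0, 1, −1} for all u v, and A u v ≠ 0 ↔ H u v ≠ 0, such that the characteristic polynomial of H equals the image under the map ℝ → ℂ of the characteristic polynomial of A (so H and A are cospectral). -/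
open Polynomial Filter

/-!
Give each edge `uv` the sign `σ(u, v) := H(u, v) ^ 2 ∈ {±1}`. Since the product of `H` around
a cycle is `±1`, `σ` multiplies to `1` around every cycle. Every closed walk reduces to cycles by cutting out loops
(`SimpleGraph.Walk.bypass`), so the `σ`-product along a walk depends only on its endpoints, and on
the connected graph `G(H)` this yields `f : V → {±1}` with `σ(u, v) = f(u) f(v)`. Switching `H` by
the diagonal unitary `D` with `D v v ^ 2 = f v` (so `D v v ∈ {1, i}`) makes `D* H D` a real
`{0, ±1}`-matrix, the signed graph `A`; being unitarily similar to `H`, it has the same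
characteristic polynomial.
-/

namespace SimpleGraph.Walk

variable {V α : Type*} [CommGroup α] {G : SimpleGraph V} {u v w : V}

def prodAlong (φ : V → V → α) (p : G.Walk u v) : α :=
  (p.darts.map fun d => φ d.fst d.snd).prod

section

variable (φ : V → V → α)

@[simp] lemma prodAlong_nil : (nil : G.Walk u u).prodAlong φ = 1 := rfl

@[simp] lemma prodAlong_cons (h : G.Adj u v) (p : G.Walk v w) :
    (cons h p).prodAlong φ = φ u v * p.prodAlong φ := by
  simp [prodAlong]

@[simp] lemma prodAlong_append (p : G.Walk u v) (q : G.Walk v w) :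
    (p.append q).prodAlong φ = p.prodAlong φ * q.prodAlong φ := by
  simp [prodAlong]

lemma prodAlong_eq_prod_range (p : G.Walk u v) :
    p.prodAlong φ = ∏ i ∈ Finset.range p.length, φ (p.getVert i) (p.getVert (i + 1)) := by
  induction p with
  | nil => simp
  | cons h p ih => simp [ih, Finset.prod_range_succ', mul_comm]

lemma getVert_val_add_one {n : ℕ} [NeZero n] {c : G.Walk u u} (hc : c.length = n) (j : ZMod n) :
    c.getVert (j + 1).val = c.getVert (j.val + 1) := by
  rw [ZMod.val_add, ZMod.val_one_eq_one_mod, Nat.add_mod_mod]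
  rcases (Nat.succ_le_of_lt (ZMod.val_lt j)).lt_or_eq with h | h
  · rw [Nat.mod_eq_of_lt h]
  · rw [show j.val + 1 = n from h, Nat.mod_self, ← hc, getVert_zero, getVert_length]

lemma prodAlong_eq_prod_zmod {n : ℕ} [NeZero n] {c : G.Walk u u} (hc : c.length = n) :
    c.prodAlong φ = ∏ j : ZMod n, φ (c.getVert j.val) (c.getVert (j + 1).val) := by
  rw [prodAlong_eq_prod_range, hc]
  refine Finset.prod_nbij' (fun i => (i : ZMod n)) ZMod.val (by simp)
    (fun j _ => Finset.mem_range.mpr (ZMod.val_lt j))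
    (fun i hi => ZMod.val_cast_of_lt (Finset.mem_range.mp hi))
    (fun j _ => ZMod.natCast_zmod_val j) fun i hi => ?_
  rw [getVert_val_add_one hc, ZMod.val_cast_of_lt (Finset.mem_range.mp hi)]

end

lemma IsCycle.injective_getVert_val {n : ℕ} [NeZero n] {c : G.Walk u u} (hc : c.IsCycle)
    (hn : c.length = n) : Function.Injective fun j : ZMod n => c.getVert j.val := fun i j h =>
  ZMod.val_injective n <| hc.getVert_injOn' (by have := ZMod.val_lt i; simp; omega)
    (by have := ZMod.val_lt j; simp; omega) h

variable {φ : V → V → α}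

lemma prodAlong_reverse (hφ : ∀ u v, G.Adj u v → φ v u = (φ u v)⁻¹) (p : G.Walk u v) :
    p.reverse.prodAlong φ = (p.prodAlong φ)⁻¹ := by
  induction p with
  | nil => simp
  | cons h p ih => simp [ih, hφ _ _ h, mul_comm]

lemma prodAlong_cons_eq_one_of_isPath (hφ : ∀ u v, G.Adj u v → φ v u = (φ u v)⁻¹)
    (hcyc : ∀ u (c : G.Walk u u), c.IsCycle → c.prodAlong φ = 1)
    (h : G.Adj u v) {p : G.Walk v u} (hp : p.IsPath) : (cons h p).prodAlong φ = 1 := by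
  by_cases he : s(u, v) ∈ p.edges
  · rw [hp.eq_adj_toWalk_of_mem_edges (Sym2.eq_swap ▸ he)]
    simp [hφ _ _ h]
  · exact hcyc u _ (Path.cons_isCycle ⟨p, hp⟩ h he)

lemma prodAlong_bypass [DecidableEq V] (hφ : ∀ u v, G.Adj u v → φ v u = (φ u v)⁻¹)
    (hcyc : ∀ u (c : G.Walk u u), c.IsCycle → c.prodAlong φ = 1)
    (p : G.Walk u v) : p.bypass.prodAlong φ = p.prodAlong φ := by
  induction p with
  | nil => rfl
  | @cons u x v h q ih =>
    rw [bypass, prodAlong_cons, ← ih]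
    split_ifs with hs
    · have hloop := prodAlong_cons_eq_one_of_isPath hφ hcyc h (q.bypass_isPath.takeUntil hs)
      conv_rhs => rw [← q.bypass.take_spec hs]
      rw [prodAlong_append, ← mul_assoc, ← prodAlong_cons φ h, hloop, one_mul]
    · rfl

lemma prodAlong_eq_of_forall_isCycle (hφ : ∀ u v, G.Adj u v → φ v u = (φ u v)⁻¹)
    (hcyc : ∀ u (c : G.Walk u u), c.IsCycle → c.prodAlong φ = 1)
    (p q : G.Walk u v) : p.prodAlong φ = q.prodAlong φ := by
  classical
  have hloop : (p.append q.reverse).bypass = nil :=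
    (isPath_iff_nil.mp (bypass_isPath _)).eq_nil
  have := prodAlong_bypass hφ hcyc (p.append q.reverse)
  rw [hloop, prodAlong_nil, prodAlong_append, prodAlong_reverse hφ] at this
  exact mul_inv_eq_one.mp this.symm

end SimpleGraph.Walk

lemma SimpleGraph.Connected.exists_potential {V α : Type*} [CommGroup α] {G : SimpleGraph V}
    (hG : G.Connected) {φ : V → V → α} (hφ : ∀ u v, G.Adj u v → φ v u = (φ u v)⁻¹)
    (hcyc : ∀ u (c : G.Walk u u), c.IsCycle → c.prodAlong φ = 1) :
    ∃ f : V → α, ∀ u v, G.Adj u v → φ u v = (f u)⁻¹ * f v := by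
  obtain ⟨r⟩ := hG.nonempty
  let p : ∀ v, G.Walk r v := fun v => (hG.preconnected r v).some
  refine ⟨fun v => (p v).prodAlong φ, fun u v h => ?_⟩
  have := Walk.prodAlong_eq_of_forall_isCycle hφ hcyc ((p u).concat h) (p v)
  rw [Walk.concat, Walk.prodAlong_append, Walk.prodAlong_cons, Walk.prodAlong_nil, mul_one] at this
  dsimp only
  rw [← this, inv_mul_cancel_left]

open Complex

noncomputable def entrySign (z : ℂ) : ℤˣ := if z = I ∨ z = -I then -1 else 1

lemma coe_entrySign {z : ℂ} (hz : z = 1 ∨ z = I ∨ z = -I) :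
    ((entrySign z : ℤ) : ℂ) = z ^ 2 := by
  rcases hz with rfl | rfl | rfl <;> simp [entrySign, Complex.ext_iff]

lemma entrySign_star (z : ℂ) : entrySign (star z) = entrySign z := by
  have : (star z = I ∨ star z = -I) ↔ (z = I ∨ z = -I) := by
    rw [or_comm]; simp [Complex.ext_iff, neg_eq_iff_eq_neg]
  simp only [entrySign, this]

lemma prod_entrySign_eq_one {ι : Type*} (s : Finset ι) {a : ι → ℂ}
    (ha : ∀ j ∈ s, a j = 1 ∨ a j = I ∨ a j = -I)
    (h : ∏ j ∈ s, a j = 1 ∨ ∏ j ∈ s, a j = -1) :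
    ∏ j ∈ s, entrySign (a j) = 1 := by
  refine Units.ext (Int.cast_injective (α := ℂ) ?_)
  push_cast
  rw [Finset.prod_congr rfl fun j hj => coe_entrySign (ha j hj), Finset.prod_pow]
  rcases h with h | h <;> simp [h]

noncomputable def sqrtSign (s : ℤˣ) : ℂ := if s = 1 then 1 else I

lemma star_sqrtSign_mul_self (s : ℤˣ) : star (sqrtSign s) * sqrtSign s = 1 := by
  unfold sqrtSign; split_ifs <;> simp

lemma star_sqrtSign_mul_mul_sqrtSign {z : ℂ} (hz : z = 1 ∨ z = I ∨ z = -I) {a b : ℤˣ}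
    (h : entrySign z = a⁻¹ * b) :
    star (sqrtSign a) * z * sqrtSign b = 1 ∨ star (sqrtSign a) * z * sqrtSign b = -1 := by
  rcases Int.units_eq_one_or a with rfl | rfl <;> rcases Int.units_eq_one_or b with rfl | rfl <;>
    rcases hz with rfl | rfl | rfl <;> simp_all [sqrtSign, entrySign, Complex.ext_iff]

namespace IsMixedAdj

variable {V : Type*} {H : Matrix V V ℂ}

lemma eq_of_ne_zero (hH : IsMixedAdj H) {u v : V} (h : H u v ≠ 0) :
    H u v = 1 ∨ H u v = I ∨ H u v = -I :=
  (hH.2.1 u v).resolve_left h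

lemma underGraph_adj (hH : IsMixedAdj H) {u v : V} : (underGraph H).Adj u v ↔ H u v ≠ 0 := by
  refine ⟨fun ⟨_, h⟩ => h.elim id fun h' h0 => h' ?_, fun h => ⟨fun huv => ?_, Or.inl h⟩⟩
  · rw [hH.2.2 v u, h0, star_zero]
  · exact h (huv ▸ hH.1 u)

lemma prodAlong_entrySign_of_isCycle (hH : IsMixedAdj H)
    (hreal : ∀ (k : ℕ) (c : ZMod (k + 3) → V), Function.Injective c →
      (∀ j, H (c j) (c (j + 1)) ≠ 0) →
      ((∏ j : ZMod (k + 3), H (c j) (c (j + 1))) = 1 ∨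
       (∏ j : ZMod (k + 3), H (c j) (c (j + 1))) = -1))
    {u : V} {c : (underGraph H).Walk u u} (hc : c.IsCycle) :
    c.prodAlong (fun u v => entrySign (H u v)) = 1 := by
  obtain ⟨k, hk⟩ : ∃ k, c.length = k + 3 :=
    ⟨c.length - 3, by have := hc.three_le_length; omega⟩
  have hstep (j : ZMod (k + 3)) : H (c.getVert j.val) (c.getVert (j + 1).val) ≠ 0 := by
    rw [c.getVert_val_add_one hk]
    exact hH.underGraph_adj.mp (c.adj_getVert_succ (by have := ZMod.val_lt j; omega))
  rw [c.prodAlong_eq_prod_zmod _ hk]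
  exact prod_entrySign_eq_one _ (fun j _ => hH.eq_of_ne_zero (hstep j))
    (hreal k _ (hc.injective_getVert_val hk) hstep)

end IsMixedAdj

open Matrix in
lemma exists_signed_cospectral_of_diagonal_conj {V : Type*} [Fintype V] [DecidableEq V]
    {H : Matrix V V ℂ} (hherm : ∀ u v, H u v = star (H v u)) (hdiag : ∀ v, H v v = 0)
    (d : V → ℂ) (hd : ∀ v, star (d v) * d v = 1)
    (hsign : ∀ u v, star (d u) * H u v * d v = 0 ∨ star (d u) * H u v * d v = 1 ∨
      star (d u) * H u v * d v = -1) :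
    ∃ A : Matrix V V ℝ, A.IsSymm ∧ (∀ v, A v v = 0) ∧
      (∀ u v, A u v = 0 ∨ A u v = 1 ∨ A u v = -1) ∧
      (∀ u v, A u v ≠ 0 ↔ H u v ≠ 0) ∧
      H.charpoly = A.charpoly.map (algebraMap ℝ ℂ) := by
  set N := diagonal (star d) * H * diagonal d
  have hN : ∀ u v, N u v = star (d u) * H u v * d v := fun u v => by
    simp [N, diagonal_mul, mul_diagonal]
  replace hsign : ∀ u v, N u v = 0 ∨ N u v = 1 ∨ N u v = -1 := by
    simpa only [← hN] using hsign
  have hreal : (N.map re).map (algebraMap ℝ ℂ) = N := by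
    ext u v; rcases hsign u v with h | h | h <;> simp [h]
  refine ⟨N.map re, IsSymm.ext fun u v => ?_, fun v => by simp [hN, hdiag], fun u v => ?_,
    fun u v => ?_, ?_⟩
  · have : N v u = star (N u v) := by
      rw [hN, hN, hherm v u, star_mul, star_mul, star_star, mul_assoc]
    rw [map_apply, map_apply, this, Complex.star_def, Complex.conj_re]
  · rcases hsign u v with h | h | h <;> simp [h]
  · have hd0 : ∀ v, d v ≠ 0 := fun v h => by simpa [h] using hd v
    rw [map_apply, show H u v ≠ 0 ↔ N u v ≠ 0 by simp [hN, hd0]]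
    rcases hsign u v with h | h | h <;> simp [h]
  · rw [← charpoly_map, hreal, charpoly_mul_comm, ← mul_assoc, diagonal_mul_diagonal]
    have hunit : (diagonal fun v => d v * star d v) = 1 := by
      simp_rw [Pi.star_apply, mul_comm (d _), hd, diagonal_one]
    rw [hunit, one_mul]

theorem stmt3_general {V : Type*} [Fintype V] [DecidableEq V]
    (H : Matrix V V ℂ) (hH : IsMixedAdj H)
    (hconn : (underGraph H).Connected)
    (hreal : ∀ (k : ℕ) (c : ZMod (k + 3) → V), Function.Injective c →
      (∀ j, H (c j) (c (j + 1)) ≠ 0) →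
      ((∏ j : ZMod (k + 3), H (c j) (c (j + 1))) = 1 ∨
       (∏ j : ZMod (k + 3), H (c j) (c (j + 1))) = -1)) :
    ∃ A : Matrix V V ℝ, A.IsSymm ∧ (∀ v, A v v = 0) ∧
      (∀ u v, A u v = 0 ∨ A u v = 1 ∨ A u v = -1) ∧
      (∀ u v, A u v ≠ 0 ↔ H u v ≠ 0) ∧
      H.charpoly = A.charpoly.map (algebraMap ℝ ℂ) := by
  obtain ⟨f, hf⟩ := hconn.exists_potential (φ := fun u v => entrySign (H u v))
    (fun u v _ => by rw [hH.2.2 v u, entrySign_star, Int.units_inv_eq_self])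
    (fun _ _ hc => hH.prodAlong_entrySign_of_isCycle hreal hc)
  refine exists_signed_cospectral_of_diagonal_conj hH.2.2 hH.1 (fun v => sqrtSign (f v))
    (fun v => star_sqrtSign_mul_self (f v)) fun u v => ?_
  by_cases h : H u v = 0
  · simp [h]
  · exact .inr <| star_sqrtSign_mul_mul_sqrtSign (hH.eq_of_ne_zero h)
      (hf u v (hH.underGraph_adj.mpr h))

/-- a mixed graph without imaginary cycles is cospectral to a signed graph. -/
theorem stmt3 {V : Type*} [Fintype V] [DecidableEq V] [Nonempty V]
    (H : Matrix V V ℂ) (hH : IsMixedAdj H)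
    (hconn : (underGraph H).Connected)
    (hreal : ∀ (k : ℕ) (c : ZMod (k + 3) → V), Function.Injective c →
      (∀ j, H (c j) (c (j + 1)) ≠ 0) →
      ((∏ j : ZMod (k + 3), H (c j) (c (j + 1))) = 1 ∨
       (∏ j : ZMod (k + 3), H (c j) (c (j + 1))) = -1)) :
    ∃ A : Matrix V V ℝ, A.IsSymm ∧ (∀ v, A v v = 0) ∧
      (∀ u v, A u v = 0 ∨ A u v = 1 ∨ A u v = -1) ∧
      (∀ u v, A u v ≠ 0 ↔ H u v ≠ 0) ∧
      H.charpoly = A.charpoly.map (algebraMap ℝ ℂ) :=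
  stmt3_general H hH hconn hreal
end

section
/- The spectral radii of the imaginary cycles C'_n converge to 2 as n → ∞: lim_{n→∞} ρ(C'_n) = 2. -/
/-!
Gershgorin's theorem bounds every eigenvalue of `C'_n` by its row sum `2`. Conversely, if
`ζ ^ n = i` then `j ↦ ζ ^ j` is an eigenvector of `C'_n` for `ζ + ζ⁻¹`: going once around
the cycle multiplies it by `ζ ^ n = i`, which the single arc of weight `i` undoes. Taking
`ζ = exp (π i / (2 n)) → 1` gives eigenvalues `ζ + ζ⁻¹ → 2`.
-/

open Polynomial Filter

open scoped Matrix

namespace Matrix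

variable {K ι : Type*} [Fintype ι] [DecidableEq ι]

theorem mem_spectrum_of_mulVec_eq_smul [Field K] {A : Matrix ι ι K} {μ : K} {x : ι → K}
    (hx : x ≠ 0) (h : A *ᵥ x = μ • x) : μ ∈ spectrum K A := by
  rw [← spectrum_toLin']
  exact (Module.End.hasEigenvalue_of_hasEigenvector
    ⟨Module.End.mem_eigenspace_iff.2 (by simpa using h), hx⟩).mem_spectrum

theorem norm_le_of_mem_spectrum [NormedField K] {A : Matrix ι ι K} {C : ℝ}
    (hA : ∀ i, ∑ j, ‖A i j‖ ≤ C) {μ : K} (hμ : μ ∈ spectrum K A) : ‖μ‖ ≤ C := by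
  rw [← spectrum_toLin', ← Module.End.hasEigenvalue_iff_mem_spectrum] at hμ
  obtain ⟨k, hk⟩ := eigenvalue_mem_ball hμ
  calc ‖μ‖ ≤ ‖A k k‖ + ∑ j ∈ Finset.univ.erase k, ‖A k j‖ :=
        norm_le_of_mem_closedBall hk
    _ = ∑ j, ‖A k j‖ := Finset.add_sum_erase _ (fun j => ‖A k j‖) (Finset.mem_univ k)
    _ ≤ C := hA k

end Matrix

section SpectralRadius

variable {V : Type*} [Fintype V] [DecidableEq V] {H : Matrix V V ℂ}

theorem specRad_le_of_sum_norm_le {C : ℝ} (hC : 0 ≤ C) (hH : ∀ i, ∑ j, ‖H i j‖ ≤ C) :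
    specRad H ≤ C :=
  Real.sSup_le (by rintro _ ⟨μ, hμ, rfl⟩; exact Matrix.norm_le_of_mem_spectrum hH hμ) hC

theorem norm_le_specRad {μ : ℂ} (hμ : μ ∈ spectrum ℂ H) : ‖μ‖ ≤ specRad H :=
  le_csSup ((Matrix.finite_spectrum H).image _).bddAbove ⟨μ, hμ, rfl⟩

end SpectralRadius

theorem ZMod.val_add_one_of_ne_neg_one {n : ℕ} [NeZero n] {j : ZMod n} (hj : j ≠ -1) :
    (j + 1).val = j.val + 1 := by
  obtain ⟨m, rfl⟩ : ∃ m, n = m + 1 := Nat.exists_eq_add_one.2 (NeZero.pos n)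
  have hjm : j.val < m := by
    refine lt_of_le_of_ne (Nat.le_of_lt_succ (ZMod.val_lt j)) fun h => hj ?_
    exact ZMod.val_injective _ (h.trans (ZMod.val_neg_one m).symm)
  have hm : m + 1 ≠ 1 := by omega
  rw [ZMod.val_add_of_lt] <;> rw [ZMod.val_one'' hm]
  omega

theorem ZMod.val_neg_one_add_one (n : ℕ) [NeZero n] : (-1 : ZMod n).val + 1 = n := by
  obtain ⟨m, rfl⟩ : ∃ m, n = m + 1 := Nat.exists_eq_add_one.2 (NeZero.pos n)
  rw [ZMod.val_neg_one]

def weightedCycle (n : ℕ) (w : ZMod n → ℂ) : Matrix (ZMod n) (ZMod n) ℂ :=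
  Matrix.of fun j l => (if l = j + 1 then w j else 0) + (if j = l + 1 then star (w l) else 0)

section WeightedCycle

variable {n : ℕ} [NeZero n] {w : ZMod n → ℂ}

theorem weightedCycle_mulVec_apply (x : ZMod n → ℂ) (j : ZMod n) :
    (weightedCycle n w *ᵥ x) j = w j * x (j + 1) + star (w (j - 1)) * x (j - 1) := by
  have hrev : ∀ l : ZMod n, (j = l + 1) = (l = j - 1) := fun l =>
    propext (eq_comm.trans eq_sub_iff_add_eq.symm)
  simp only [Matrix.mulVec, dotProduct, weightedCycle, Matrix.of_apply, add_mul, ite_mul,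
    zero_mul, hrev, Finset.sum_add_distrib, Finset.sum_ite_eq', Finset.mem_univ, if_true]

theorem weightedCycle_sum_norm_le_two (hw : ∀ j, ‖w j‖ ≤ 1) (j : ZMod n) :
    ∑ l, ‖weightedCycle n w j l‖ ≤ 2 := by
  have hrev : ∀ l : ZMod n, (j = l + 1) = (l = j - 1) := fun l =>
    propext (eq_comm.trans eq_sub_iff_add_eq.symm)
  calc ∑ l, ‖weightedCycle n w j l‖
      ≤ ∑ l, ((if l = j + 1 then ‖w j‖ else 0) + (if l = j - 1 then ‖w l‖ else 0)) := by
        refine Finset.sum_le_sum fun l _ => ?_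
        simp only [weightedCycle, Matrix.of_apply, hrev]
        refine (norm_add_le _ _).trans (add_le_add ?_ ?_) <;> split_ifs <;> simp
    _ = ‖w j‖ + ‖w (j - 1)‖ := by
        simp only [Finset.sum_add_distrib, Finset.sum_ite_eq', Finset.mem_univ, if_true]
    _ ≤ 2 := by linarith [hw j, hw (j - 1)]

theorem weightedCycle_mulVec_eq_smul (hw : ∀ j, w j * star (w j) = 1) {ζ : ℂ} (hζ : ζ ≠ 0)
    {x : ZMod n → ℂ} (hx : ∀ j, x (j + 1) = star (w j) * ζ * x j) :
    weightedCycle n w *ᵥ x = (ζ + ζ⁻¹) • x := by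
  funext j
  have hback : star (w (j - 1)) * x (j - 1) = ζ⁻¹ * x j := by
    rw [eq_inv_mul_iff_mul_eq₀ hζ, ← sub_add_cancel j 1, hx, sub_add_cancel]
    ring
  rw [weightedCycle_mulVec_apply, hback, hx, Pi.smul_apply, smul_eq_mul,
    ← mul_assoc, ← mul_assoc, hw]
  ring

end WeightedCycle

section ImaginaryCycle

variable {n : ℕ} [NeZero n]

theorem CpCycle_eq_weightedCycle :
    CpCycle n = weightedCycle n fun j => if j = -1 then Complex.I else 1 := by
  ext j l
  simp only [CpCycle, weightedCycle, Matrix.of_apply, apply_ite star, Complex.star_def,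
    Complex.conj_I, map_one]

theorem specRad_CpCycle_le_two : specRad (CpCycle n) ≤ 2 := by
  rw [CpCycle_eq_weightedCycle]
  exact specRad_le_of_sum_norm_le zero_le_two
    (weightedCycle_sum_norm_le_two fun j => by split_ifs <;> simp)

theorem add_inv_mem_spectrum_CpCycle {ζ : ℂ} (hζ : ζ ^ n = Complex.I) :
    ζ + ζ⁻¹ ∈ spectrum ℂ (CpCycle n) := by
  have hζ0 : ζ ≠ 0 := by
    rintro rfl
    exact Complex.I_ne_zero (hζ.symm.trans (zero_pow (NeZero.ne n)))
  have htwist : ∀ j : ZMod n, ζ ^ (j + 1).val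
      = star (if j = -1 then Complex.I else 1) * ζ * ζ ^ j.val := by
    intro j
    split_ifs with hj
    · rw [hj, neg_add_cancel, ZMod.val_zero, mul_assoc, ← pow_succ',
        ZMod.val_neg_one_add_one, hζ]
      simp
    · rw [ZMod.val_add_one_of_ne_neg_one hj, pow_succ']
      simp
  rw [CpCycle_eq_weightedCycle]
  refine Matrix.mem_spectrum_of_mulVec_eq_smul (x := fun j => ζ ^ j.val) ?_
    (weightedCycle_mulVec_eq_smul (w := fun j => if j = -1 then Complex.I else 1)
      (fun j => by split_ifs <;> simp) hζ0 htwist)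
  exact Function.ne_iff.2 ⟨0, by simp⟩

end ImaginaryCycle

theorem exp_pi_div_two_mul_I_div_pow {n : ℕ} (hn : n ≠ 0) :
    Complex.exp (Real.pi / 2 * Complex.I / n) ^ n = Complex.I := by
  rw [← Complex.exp_nat_mul, mul_div_cancel₀ _ (Nat.cast_ne_zero.2 hn),
    Complex.exp_pi_div_two_mul_I]

/-- `ρ(C'_n) → 2` (here `n = k + 3 ≥ 3`). -/
theorem stmt15 :
    Tendsto (fun k : ℕ => specRad (CpCycle (k + 3))) atTop (nhds 2) := by
  set ζ : ℕ → ℂ := fun n => Complex.exp (Real.pi / 2 * Complex.I / n) with hζ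
  have hlower (k : ℕ) : ‖ζ (k + 3) + (ζ (k + 3))⁻¹‖ ≤ specRad (CpCycle (k + 3)) :=
    norm_le_specRad (add_inv_mem_spectrum_CpCycle (exp_pi_div_two_mul_I_div_pow (by omega)))
  have hζ_lim : Tendsto (fun k => ζ (k + 3)) atTop (nhds 1) := by
    have := (Complex.continuous_exp.tendsto 0).comp
      ((tendsto_const_div_atTop_nhds_zero_nat (Real.pi / 2 * Complex.I)).comp
        (tendsto_add_atTop_nat 3))
    simpa [hζ, Function.comp_def] using this
  have hlim : Tendsto (fun k => ‖ζ (k + 3) + (ζ (k + 3))⁻¹‖) atTop (nhds 2) := by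
    simpa [one_add_one_eq_two] using (hζ_lim.add (hζ_lim.inv₀ one_ne_zero)).norm
  exact tendsto_of_tendsto_of_tendsto_of_le_of_le hlim tendsto_const_nhds hlower
    fun k => specRad_CpCycle_le_two
end
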